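/- arXiv:1610.08390 — 2 statements merged into one kernel-verified Lean document; each statement's English description precedes it below -/
import Mathlib

section
/- Let n, d, p ≥ 1 be integers, ε > 0, and set N = (n+1)d + p(n+1)³·I(ε⁻¹)·d, u = C(N+n, n), and b = N(N−d)⋯(N−nd)/((n+1)!·d). Then p·u·N/(d·b) ≤ p(n+1) + ε. -/
/-!
Writing `M = N - (n+1)d = p(n+1)³ I d`, the quotient `p u N / (d b)` equals
`p(n+1) ∏_{j=1}^n (N+j)/(M+jd)`, and each factor is at most `N/M = 1 + x` with `x = (n+1)d/M`.
Since `n(n+1)x ≤ 1`, `(1+x)^n ≤ e^{nx} ≤ 1/(1-nx) ≤ 1+(n+1)x`, and `p(n+1)·(n+1)x = 1/I < ε`.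
-/

open Finset Nat

lemma choose_mul_factorial_eq_prod (N n : ℕ) :
    ((N + n).choose n * n ! : ℝ) = ∏ j ∈ range n, ((N : ℝ) + (j + 1)) := by
  have h := Nat.ascFactorial_eq_factorial_mul_choose N n
  rw [Nat.ascFactorial_eq_prod_range] at h
  rw [mul_comm, ← Nat.cast_mul, ← h]
  push_cast
  exact prod_congr rfl fun j _ => by ring

lemma prod_range_succ_sub_mul {R : Type*} [CommRing R] (N d : R) (n : ℕ) :
    ∏ j ∈ range (n + 1), (N - j * d) =
      N * ∏ j ∈ range n, (N - (n + 1) * d + (j + 1) * d) := by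
  rw [← prod_range_reflect, prod_range_succ, mul_comm]
  congr 1
  · simp
  · refine prod_congr rfl fun j hj => ?_
    rw [Nat.add_sub_cancel, Nat.cast_sub (mem_range.mp hj).le]
    ring

lemma prod_add_le_div_pow_mul_prod {M N d : ℝ} (hM : 0 < M) (hMN : M ≤ N) (hd : 1 ≤ d)
    (n : ℕ) :
    ∏ j ∈ range n, (N + (j + 1)) ≤ (N / M) ^ n * ∏ j ∈ range n, (M + (j + 1) * d) := by
  rw [← card_range n, ← prod_const, card_range, ← prod_mul_distrib]
  have hk : ∀ j : ℕ, (0 : ℝ) ≤ j + 1 := fun j => by positivity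
  refine prod_le_prod (fun j _ => by linarith [hk j]) fun j _ => ?_
  rw [div_mul_eq_mul_div, le_div_iff₀ hM]
  nlinarith [mul_le_mul_of_nonneg_left hMN (hk j),
    mul_nonneg (mul_nonneg (hk j) hM.le) (sub_nonneg.2 hd)]

lemma one_add_pow_le_inv_one_sub_mul {x : ℝ} (hx : 0 ≤ x) {n : ℕ} (h : n * x < 1) :
    (1 + x) ^ n ≤ (1 - n * x)⁻¹ := by
  calc (1 + x) ^ n ≤ Real.exp x ^ n := by
        gcongr
        linarith [Real.add_one_le_exp x]
    _ = Real.exp (n * x) := (Real.exp_nat_mul x n).symm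
    _ ≤ (1 - n * x)⁻¹ := by
        rw [inv_eq_one_div]
        exact Real.exp_bound_div_one_sub_of_interval (by positivity) h

lemma one_add_pow_le_one_add_succ_mul {x : ℝ} (hx : 0 ≤ x) {n : ℕ}
    (h : n * (n + 1) * x ≤ 1) : (1 + x) ^ n ≤ 1 + (n + 1) * x := by
  rcases n.eq_zero_or_pos with rfl | hn
  · simpa using hx
  have hn1 : (1 : ℝ) ≤ n := by exact_mod_cast hn
  have hnx : n * x < 1 := by nlinarith
  refine (one_add_pow_le_inv_one_sub_mul hx hnx).trans ?_
  rw [inv_le_iff_one_le_mul₀' (by linarith)]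
  nlinarith

lemma choose_mul_div_prod_sub_mul_le (N n d : ℕ) (hd : 1 ≤ d) (hNd : ((n + 1) * d : ℝ) < N) :
    ((N + n).choose n : ℝ) * (n + 1)! * N / ∏ j ∈ range (n + 1), ((N : ℝ) - j * d) ≤
      (n + 1) * (N / (N - (n + 1) * d)) ^ n := by
  rw [prod_range_succ_sub_mul]
  set M : ℝ := N - (n + 1) * d
  have hM : 0 < M := sub_pos.2 hNd
  have hN : (0 : ℝ) < N := by linarith [hM, (by positivity : (0 : ℝ) ≤ (n + 1) * d)]
  set B := ∏ j ∈ range n, (M + (j + 1) * d)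
  have hB : 0 < B := prod_pos fun j _ => by positivity
  have hratio : ((N + n).choose n : ℝ) * (n + 1)! * N / (N * B) =
      (n + 1) * ((∏ j ∈ range n, ((N : ℝ) + (j + 1))) / B) := by
    rw [← choose_mul_factorial_eq_prod, factorial_succ]
    push_cast
    field_simp
  rw [hratio]
  gcongr
  rw [div_le_iff₀ hB]
  exact prod_add_le_div_pow_mul_prod hM (by linarith [(by positivity : (0 : ℝ) ≤ (n + 1) * d)])
    (by exact_mod_cast hd) n

theorem stmt_5_general (n d p : ℕ) (hd : 1 ≤ d) (hp : 1 ≤ p)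
    (ε : ℝ) (hε : 0 < ε) (I : ℕ) (hI : ε⁻¹ < I ∧ ∀ a : ℤ, ε⁻¹ < a → (I : ℤ) ≤ a)
    (N : ℕ) (hN : N = (n + 1) * d + p * (n + 1) ^ 3 * I * d)
    (u : ℕ) (hu : u = (N + n).choose n)
    (b : ℝ)
    (hb : b = (∏ j ∈ Finset.range (n + 1), ((N : ℝ) - j * d)) /
      ((Nat.factorial (n + 1)) * d)) :
    (p : ℝ) * u * N / (d * b) ≤ p * (n + 1) + ε := by
  have hI1 : (1 : ℝ) ≤ I := by
    exact_mod_cast Nat.one_le_iff_ne_zero.2 (by rintro rfl; linarith [inv_pos.2 hε, hI.1])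
  have hpI : (1 : ℝ) ≤ p * I := one_le_mul_of_one_le_of_one_le (by exact_mod_cast hp) hI1
  set M : ℝ := p * (n + 1) ^ 3 * I * d with hM
  have hM0 : 0 < M := by positivity
  have hNM : (N : ℝ) - (n + 1) * d = M := by rw [hN]; push_cast; ring
  have hpow : ((N : ℝ) / M) ^ n ≤ 1 + (n + 1) * ((n + 1) * d / M) := by
    rw [show (N : ℝ) / M = 1 + (n + 1) * d / M by field_simp; linarith]
    refine one_add_pow_le_one_add_succ_mul (by positivity) ?_
    rw [mul_div_assoc', div_le_one hM0, hM]
    nlinarith [mul_le_mul_of_nonneg_right hpI (by positivity : (0 : ℝ) ≤ (n + 1) ^ 3 * d)]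
  calc (p : ℝ) * u * N / (d * b)
      = p * (((N + n).choose n : ℝ) * (n + 1)! * N / ∏ j ∈ range (n + 1), ((N : ℝ) - j * d)) := by
        have hdb : d * b = (∏ j ∈ range (n + 1), ((N : ℝ) - j * d)) / (n + 1)! := by
          rw [hb]; field_simp
        rw [hdb, hu, div_div_eq_mul_div]
        ring
    _ ≤ p * ((n + 1) * (N / M) ^ n) := by
        rw [← hNM]
        gcongr
        exact choose_mul_div_prod_sub_mul_le N n d hd (by linarith)
    _ ≤ p * ((n + 1) * (1 + (n + 1) * ((n + 1) * d / M))) := by gcongr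
    _ = p * (n + 1) + (I : ℝ)⁻¹ := by rw [hM]; field_simp
    _ ≤ p * (n + 1) + ε := by gcongr; exact inv_lt_of_inv_lt₀ hε hI.1 |>.le

/-- With `N = (n+1)d + p(n+1)³ I(ε⁻¹) d`, `u = C(N+n,n)` and
`b = N(N−d)⋯(N−nd)/((n+1)!·d)`, one has `puN/(db) ≤ p(n+1) + ε`. -/
theorem stmt_5 (n d p : ℕ) (hn : 1 ≤ n) (hd : 1 ≤ d) (hp : 1 ≤ p)
    (ε : ℝ) (hε : 0 < ε) (I : ℕ) (hI : ε⁻¹ < I ∧ ∀ a : ℤ, ε⁻¹ < a → (I : ℤ) ≤ a)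
    (N : ℕ) (hN : N = (n + 1) * d + p * (n + 1) ^ 3 * I * d)
    (u : ℕ) (hu : u = (N + n).choose n)
    (b : ℝ)
    (hb : b = (∏ j ∈ Finset.range (n + 1), ((N : ℝ) - j * d)) /
      ((Nat.factorial (n + 1)) * d)) :
    (p : ℝ) * u * N / (d * b) ≤ p * (n + 1) + ε :=
  stmt_5_general n d p hd hp ε hε I hI N hN u hu b hb
end

section
/- Let n, d, N be positive integers with d | N and N/d ≥ n+1, and suppose m_{(i)} = dⁿ for all n-tuples (i) with σ(i) ≤ N/d − n (and m_{(i)} ≥ 0 otherwise). Then for each fixed j ∈ {1,…,n}, Σ_{σ(i) ≤ N/d} m_{(i)}·i_j ≥ N(N−d)⋯(N−(n−1)d)(N−nd)/((n+1)!·d). -/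
/-!
Where `m` is known to equal `dⁿ`, i.e. on the tuples with `σ(i) ≤ T := N/d − n`, the sum is
`dⁿ · Σ_{σ(i) ≤ T} i_j`, and the remaining terms are nonnegative. Adding `1` to the coordinate `j`
matches the tuples with `σ(i) ≤ T` to those with `σ(i) ≤ T + 1` and `i_j ≠ 0`, so
`Σ_{σ(i) ≤ T+1} i_j = Σ_{σ(i) ≤ T} i_j + C(T+n, n)` (stars and bars), and Pascal's rule gives
`Σ_{σ(i) ≤ T} i_j = C(T+n, n+1) = C(N/d, n+1)`, which is the claimed bound divided by `dⁿ`.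
-/

open Finset

def tuplesSumLE (ι : Type*) [Fintype ι] [DecidableEq ι] (T : ℕ) : Finset (ι → ℕ) :=
  {i ∈ Fintype.piFinset fun _ : ι => range (T + 1) | ∑ s, i s ≤ T}

section

variable {ι : Type*} [Fintype ι] [DecidableEq ι]

theorem mem_tuplesSumLE {T : ℕ} {i : ι → ℕ} : i ∈ tuplesSumLE ι T ↔ ∑ s, i s ≤ T := by
  simp only [tuplesSumLE, mem_filter, Fintype.mem_piFinset, mem_range, and_iff_right_iff_imp]
  exact fun h s =>
    Nat.lt_succ_of_le ((single_le_sum (fun _ _ => Nat.zero_le _) (mem_univ s)).trans h)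

theorem tuplesSumLE_mono {S T : ℕ} (h : S ≤ T) : tuplesSumLE ι S ⊆ tuplesSumLE ι T :=
  fun _ hi => mem_tuplesSumLE.2 ((mem_tuplesSumLE.1 hi).trans h)

theorem card_tuplesSumLE_filter_sum_eq {t T : ℕ} (ht : t ≤ T) :
    #{i ∈ tuplesSumLE ι T | ∑ s, i s = t} = (Fintype.card ι).multichoose t := by
  rw [← Fintype.card_fin (Fintype.card ι), ← Sym.card_sym_eq_multichoose,
    ← Fintype.card_congr (Sym.equivCongr (Fintype.equivFin ι))]
  refine card_eq_of_equiv_fintype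
    ((Equiv.subtypeEquivRight fun i => ?_).trans (Sym.equivNatSumOfFintype ι t).symm)
  simp only [mem_filter, mem_tuplesSumLE, and_iff_right_iff_imp]
  exact fun h => h ▸ ht

theorem card_tuplesSumLE (T : ℕ) :
    #(tuplesSumLE ι T) = (T + Fintype.card ι).choose (Fintype.card ι) := by
  have hmaps : Set.MapsTo (fun i : ι → ℕ => ∑ s, i s) (tuplesSumLE ι T) (range (T + 1)) :=
    fun _ hi => mem_range_succ_iff.2 (mem_tuplesSumLE.1 hi)
  rw [card_eq_sum_card_fiberwise hmaps, ← Nat.sum_range_multichoose]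
  exact sum_congr rfl fun t ht => card_tuplesSumLE_filter_sum_eq (mem_range_succ_iff.1 ht)

theorem sum_apply_tuplesSumLE_succ (T : ℕ) (j : ι) :
    ∑ i ∈ tuplesSumLE ι (T + 1), i j = ∑ i ∈ tuplesSumLE ι T, i j + #(tuplesSumLE ι T) := by
  rw [card_eq_sum_ones, ← sum_add_distrib, eq_comm]
  refine sum_bij_ne_zero (fun i _ _ => i + Pi.single j 1) ?_ ?_ ?_ ?_
  · intro i hi _
    rw [mem_tuplesSumLE] at hi ⊢
    simp [sum_add_distrib, hi]
  · intro a _ _ b _ _ h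
    exact add_right_cancel h
  · intro i hi hij
    have hle : Pi.single j 1 ≤ i := by
      intro s
      by_cases hs : s = j
      · subst hs; simp; omega
      · simp [hs]
    refine ⟨i - Pi.single j 1, ?_, by simp, tsub_add_cancel_of_le hle⟩
    rw [mem_tuplesSumLE] at hi ⊢
    have hsum : ∑ s, (i - Pi.single j 1 : ι → ℕ) s + 1 = ∑ s, i s := by
      conv_rhs => rw [← tsub_add_cancel_of_le hle]
      simp only [Pi.add_apply, sum_add_distrib, sum_pi_single', mem_univ, if_true]
    omega
  · intro i _ _
    simp

theorem sum_apply_tuplesSumLE (T : ℕ) (j : ι) :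
    ∑ i ∈ tuplesSumLE ι T, i j = (T + Fintype.card ι).choose (Fintype.card ι + 1) := by
  induction T with
  | zero =>
    rw [zero_add, Nat.choose_succ_self]
    exact sum_eq_zero fun i hi => Nat.eq_zero_of_le_zero
      ((single_le_sum (fun _ _ => Nat.zero_le _) (mem_univ j)).trans (mem_tuplesSumLE.1 hi))
  | succ T ih =>
    rw [sum_apply_tuplesSumLE_succ, ih, card_tuplesSumLE, add_right_comm,
      Nat.choose_succ_succ', add_comm]

end

theorem prod_range_natCast_mul_sub (d q k : ℕ) :
    ∏ l ∈ range k, ((d * q : ℕ) - l * d : ℝ) = d ^ k * q.descFactorial k := by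
  rw [← descPochhammer_eval_eq_descFactorial, descPochhammer_eval_eq_prod_range, ← card_range k,
    ← prod_const, card_range, ← prod_mul_distrib]
  refine prod_congr rfl fun l _ => ?_
  push_cast
  ring

theorem stmt_19_general (n d N : ℕ) (hd : 1 ≤ d) (hdvd : d ∣ N)
    (hNd : n + 1 ≤ N / d)
    (m : (Fin n → ℕ) → ℝ)
    (hm : ∀ i : Fin n → ℕ, (∑ s, i s) ≤ N / d - n → m i = (d : ℝ) ^ n)
    (hm0 : ∀ i, 0 ≤ m i) (j : Fin n) :
    (∏ l ∈ Finset.range (n + 1), ((N : ℝ) - l * d)) /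
        ((Nat.factorial (n + 1)) * d) ≤
      ∑ i ∈ Finset.filter (fun i : Fin n → ℕ => ∑ s, i s ≤ N / d)
          (Fintype.piFinset fun _ : Fin n => Finset.range (N / d + 1)),
        m i * (i j : ℝ) := by
  obtain ⟨q, rfl⟩ := hdvd
  have hd0 : (d : ℝ) ≠ 0 := by positivity
  rw [Nat.mul_div_cancel_left q (by omega)] at hNd hm ⊢
  have hlhs : (∏ l ∈ range (n + 1), ((d * q : ℕ) - l * d : ℝ)) / ((n + 1).factorial * d)
      = d ^ n * q.choose (n + 1) := by
    rw [prod_range_natCast_mul_sub, Nat.descFactorial_eq_factorial_mul_choose]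
    field_simp
    push_cast
    ring
  have hrestrict :
      ∑ i ∈ tuplesSumLE (Fin n) (q - n), m i * (i j : ℝ) = d ^ n * q.choose (n + 1) := by
    rw [sum_congr rfl fun i hi => by rw [hm i (mem_tuplesSumLE.1 hi)], ← mul_sum,
      ← Nat.cast_sum, sum_apply_tuplesSumLE, Fintype.card_fin, Nat.sub_add_cancel (by omega)]
  calc _ = ∑ i ∈ tuplesSumLE (Fin n) (q - n), m i * (i j : ℝ) := hlhs.trans hrestrict.symm
    _ ≤ ∑ i ∈ tuplesSumLE (Fin n) q, m i * (i j : ℝ) :=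
      sum_le_sum_of_subset_of_nonneg (tuplesSumLE_mono (Nat.sub_le q n))
        fun i _ _ => mul_nonneg (hm0 i) (Nat.cast_nonneg _)

/-- Let `d ∣ N` with `N/d ≥ n+1`, and suppose `m_{(i)} = dⁿ` whenever
`σ(i) ≤ N/d − n` and `m_{(i)} ≥ 0` always.  Then for each fixed coordinate `j`,
`Σ_{σ(i) ≤ N/d} m_{(i)} i_j ≥ N(N−d)⋯(N−nd)/((n+1)!·d)`. -/
theorem stmt_19 (n d N : ℕ) (hn : 1 ≤ n) (hd : 1 ≤ d) (hdvd : d ∣ N)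
    (hNd : n + 1 ≤ N / d)
    (m : (Fin n → ℕ) → ℝ)
    (hm : ∀ i : Fin n → ℕ, (∑ s, i s) ≤ N / d - n → m i = (d : ℝ) ^ n)
    (hm0 : ∀ i, 0 ≤ m i) (j : Fin n) :
    (∏ l ∈ Finset.range (n + 1), ((N : ℝ) - l * d)) /
        ((Nat.factorial (n + 1)) * d) ≤
      ∑ i ∈ Finset.filter (fun i : Fin n → ℕ => ∑ s, i s ≤ N / d)
          (Fintype.piFinset fun _ : Fin n => Finset.range (N / d + 1)),
        m i * (i j : ℝ) :=
  stmt_19_general n d N hd hdvd hNd m hm hm0 j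
end
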